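/- Let κ < Γ be infinite cardinals and let T be the transfinite shift defined by Tf(0)=1, Tf(1)=-1, Tf(α+2)=f(α), Tf(β) = inf_{α<β} sup_{α<γ<β} f(γ) for limit β, Tf(β+1) = sup_{α<β} inf_{α<γ<β} f(γ) for limit β. Then T has no fixed point in the closed unit ball of X^{κ,Γ} = {f ∈ ℓ∞(Γ) : f is constant off a set of cardinality at most κ}. -/

import Mathlib

open scoped Classical

/-- The transfinite shift: `Tf(0) = 1`, `Tf(1) = -1`, `Tf(α+2) = f(α)`,
`Tf(β) = inf_{α<β} sup_{α<γ<β} f(γ)` for `β` limit, and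
`Tf(β+1) = sup_{α<β} inf_{α<γ<β} f(γ)` for `β` limit. -/
noncomputable def Tshift (f : Ordinal → ℝ) (o : Ordinal) : ℝ :=
  if o = 0 then 1
  else if o = 1 then -1
  else if h : ∃ α, o = α + 2 then f h.choose
  else if Order.IsSuccLimit o then ⨅ α : Set.Iio o, ⨆ γ : Set.Ioo (α : Ordinal) o, f γ
  else ⨆ α : Set.Iio (Ordinal.pred o), ⨅ γ : Set.Ioo (α : Ordinal) (Ordinal.pred o), f γ

universe u

lemma ord_lt_two_iff {x : Ordinal} (h : x < 2) : x = 0 ∨ x = 1 := by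
  have h2 : (2 : Ordinal) = Order.succ 1 := by
    rw [← Ordinal.add_one_eq_succ]; norm_num
  rw [h2, Order.lt_succ_iff] at h
  exact Ordinal.le_one_iff.1 h

lemma ord_lt_add_one (a : Ordinal) : a < a + 1 := by
  rw [Ordinal.add_one_eq_succ]; exact Order.lt_succ a

lemma ord_one_mod_two : (1 : Ordinal) % 2 = 1 :=
  Ordinal.mod_eq_of_lt (by
    rw [show (2 : Ordinal) = Order.succ 1 by rw [← Ordinal.add_one_eq_succ]; norm_num]
    exact Order.lt_succ 1)

open Ordinal in
lemma mod2_cases (α : Ordinal) : α % 2 = 0 ∨ α % 2 = 1 :=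
  ord_lt_two_iff (Ordinal.mod_lt α (by norm_num))

open Ordinal in
lemma mod2_succ_even {α : Ordinal} (h : α % 2 = 0) : (α + 1) % 2 = 1 := by
  conv_lhs => rw [← Ordinal.div_add_mod α 2, h, add_zero]
  rw [Ordinal.mul_add_mod_self]
  exact ord_one_mod_two

open Ordinal in
lemma mod2_succ_odd {α : Ordinal} (h : α % 2 = 1) : (α + 1) % 2 = 0 := by
  conv_lhs => rw [← Ordinal.div_add_mod α 2, h, add_assoc]
  rw [show (1 : Ordinal) + 1 = 2 by norm_num,
    show (2 : Ordinal) * (α / 2) + 2 = 2 * (α / 2 + 1) by rw [mul_add, mul_one],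
    Ordinal.mul_mod]

open Ordinal in
lemma mod2_add_two (α : Ordinal) : (α + 2) % 2 = α % 2 := by
  have h2 : α + 2 = α + 1 + 1 := by rw [add_assoc]; norm_num
  rcases mod2_cases α with h | h
  · rw [h2, mod2_succ_odd (mod2_succ_even h), h]
  · rw [h2, mod2_succ_even (mod2_succ_odd h), h]

open Ordinal in
lemma mod2_limit {α : Ordinal} (h : Order.IsSuccLimit α) : α % 2 = 0 := by
  apply Ordinal.mod_eq_zero_of_dvd
  have hω : (2 : Ordinal) ∣ ω := ⟨ω, (Ordinal.mul_omega0 (by norm_num)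
    (by exact_mod_cast Ordinal.nat_lt_omega0 2)).symm⟩
  exact hω.trans (Ordinal.isSuccLimit_iff_omega0_dvd.1 h).2

/-- The parity function: `1` on "even" ordinals, `-1` on "odd" ones. -/
noncomputable def gpar (α : Ordinal) : ℝ := if α % 2 = 0 then 1 else -1

lemma gpar_mem (α : Ordinal) : gpar α = 1 ∨ gpar α = -1 := by
  unfold gpar; split <;> simp

lemma gpar_le_one (α : Ordinal) : gpar α ≤ 1 := by
  rcases gpar_mem α with h | h <;> rw [h] <;> norm_num

lemma neg_one_le_gpar (α : Ordinal) : -1 ≤ gpar α := by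
  rcases gpar_mem α with h | h <;> rw [h] <;> norm_num

/-- In any interval `(a, β)` with `β` limit there is an "even" point. -/
lemma exists_even_mem {a β : Ordinal} (hβ : Order.IsSuccLimit β) (ha : a < β) :
    ∃ γ ∈ Set.Ioo a β, gpar γ = 1 := by
  rcases mod2_cases (a + 1) with h | h
  · refine ⟨a + 1, ⟨ord_lt_add_one a, ?_⟩, by unfold gpar; rw [if_pos h]⟩
    rw [Ordinal.add_one_eq_succ]; exact hβ.succ_lt ha
  · refine ⟨a + 1 + 1, ⟨?_, ?_⟩, by unfold gpar; rw [if_pos (mod2_succ_odd h)]⟩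
    · exact (ord_lt_add_one a).trans (ord_lt_add_one (a + 1))
    · rw [Ordinal.add_one_eq_succ, Ordinal.add_one_eq_succ]
      exact hβ.succ_lt (hβ.succ_lt ha)

/-- In any interval `(a, β)` with `β` limit there is an "odd" point. -/
lemma exists_odd_mem {a β : Ordinal} (hβ : Order.IsSuccLimit β) (ha : a < β) :
    ∃ γ ∈ Set.Ioo a β, gpar γ = -1 := by
  rcases mod2_cases (a + 1) with h | h
  · refine ⟨a + 1 + 1, ⟨?_, ?_⟩,
      by unfold gpar; rw [if_neg (by rw [mod2_succ_even h]; exact one_ne_zero)]⟩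
    · exact (ord_lt_add_one a).trans (ord_lt_add_one (a + 1))
    · rw [Ordinal.add_one_eq_succ, Ordinal.add_one_eq_succ]
      exact hβ.succ_lt (hβ.succ_lt ha)
  · refine ⟨a + 1, ⟨ord_lt_add_one a, ?_⟩,
      by unfold gpar; rw [if_neg (by rw [h]; exact one_ne_zero)]⟩
    rw [Ordinal.add_one_eq_succ]; exact hβ.succ_lt ha

/-- For infinite cardinals `κ < Γ`, the transfinite shift `T` has no fixed point in the
closed unit ball of `X^{κ,Γ} = {f ∈ ℓ∞(Γ) : f constant off a set of cardinality ≤ κ}`,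
where `Γ` is identified with the set of ordinals below the initial ordinal of `Γ`. -/
theorem stmt12 (κ Γ : Cardinal.{u}) (hκ : Cardinal.aleph0 ≤ κ) (hκΓ : κ < Γ) :
    ¬ ∃ f : Ordinal.{u} → ℝ,
      (∀ α < Γ.ord, |f α| ≤ 1) ∧
      (∃ (A : Set Ordinal.{u}) (c : ℝ), Cardinal.mk A ≤ Cardinal.lift.{u+1} κ ∧
        ∀ α < Γ.ord, α ∉ A → f α = c) ∧
      (∀ α < Γ.ord, Tshift f α = f α) := by
  rintro ⟨f, _hb, ⟨A, c, hA, hAc⟩, hfix⟩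
  -- Step 1: the fixed point equation forces `f = gpar` below `Γ.ord`.
  have key : ∀ α, α < Γ.ord → f α = gpar α := by
    intro α
    induction α using Ordinal.induction with
    | h α IH =>
      intro hα
      rw [← hfix α hα]
      unfold Tshift
      by_cases h0 : α = 0
      · subst h0; simp [gpar, Ordinal.zero_mod]
      rw [if_neg h0]
      by_cases h1 : α = 1
      · subst h1
        rw [if_pos rfl]
        unfold gpar
        rw [if_neg (by rw [ord_one_mod_two]; exact one_ne_zero)]
      rw [if_neg h1]
      by_cases h2 : ∃ β, α = β + 2
      · rw [dif_pos h2]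
        have hspec := h2.choose_spec
        have hself : h2.choose < h2.choose + 2 := by
          simpa using (add_lt_add_left (by norm_num : (0 : Ordinal) < 2) h2.choose)
        have hlt : h2.choose < α := lt_of_lt_of_eq hself hspec.symm
        have hm : α % 2 = h2.choose % 2 := by
          calc α % 2 = (h2.choose + 2) % 2 := by rw [← hspec]
            _ = h2.choose % 2 := mod2_add_two _
        rw [IH _ hlt (hlt.trans hα)]
        unfold gpar
        rw [hm]
      rw [dif_neg h2]
      by_cases hlim : Order.IsSuccLimit α
      · rw [if_pos hlim]
        have hsup : ∀ a : Set.Iio α, (⨆ γ : Set.Ioo (a : Ordinal) α, f γ) = 1 := by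
          rintro ⟨a, ha⟩
          obtain ⟨γ₀, hγ₀, hγ₀v⟩ := exists_even_mem hlim ha
          have hne : Nonempty (Set.Ioo a α) := ⟨⟨γ₀, hγ₀⟩⟩
          have hbdd : BddAbove (Set.range fun γ : Set.Ioo a α => f γ) := by
            refine ⟨1, ?_⟩
            rintro x ⟨⟨γ, hγ⟩, rfl⟩
            exact le_trans (le_of_eq (IH γ hγ.2 (hγ.2.trans hα))) (gpar_le_one γ)
          refine le_antisymm (ciSup_le ?_) ?_
          · rintro ⟨γ, hγ⟩
            exact le_trans (le_of_eq (IH γ hγ.2 (hγ.2.trans hα))) (gpar_le_one γ)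
          · have h1' : f γ₀ = 1 := by rw [IH _ hγ₀.2 (hγ₀.2.trans hα), hγ₀v]
            calc (1 : ℝ) = f γ₀ := h1'.symm
              _ ≤ _ := le_ciSup hbdd (⟨γ₀, hγ₀⟩ : Set.Ioo a α)
        have hne0 : Nonempty (Set.Iio α) := ⟨⟨0, hlim.pos⟩⟩
        rw [iInf_congr hsup, ciInf_const]
        unfold gpar
        rw [mod2_limit hlim, if_pos rfl]
      · rw [if_neg hlim]
        -- `α` is a successor of a limit ordinal.
        rcases Ordinal.zero_or_succ_or_isSuccLimit α with h | ⟨β, hβ⟩ | h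
        · exact absurd h h0
        swap
        · exact absurd h hlim
        have hpred : Ordinal.pred α = β := by rw [← hβ, Ordinal.pred_succ]
        have hβlim : Order.IsSuccLimit β := by
          rcases Ordinal.zero_or_succ_or_isSuccLimit β with hb | ⟨δ, hδ⟩ | hb
          · exfalso; apply h1; rw [← hβ, hb, ← Ordinal.add_one_eq_succ, zero_add]
          · exfalso; apply h2
            exact ⟨δ, by rw [← hβ, ← hδ, ← Ordinal.add_one_eq_succ, ← Ordinal.add_one_eq_succ,
              add_assoc]; norm_num⟩
          · exact hb
        have hβα : β < α := by rw [← hβ]; exact Order.lt_succ β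
        rw [hpred]
        have hinf : ∀ a : Set.Iio β, (⨅ γ : Set.Ioo (a : Ordinal) β, f γ) = -1 := by
          rintro ⟨a, ha⟩
          obtain ⟨γ₀, hγ₀, hγ₀v⟩ := exists_odd_mem hβlim ha
          have hne : Nonempty (Set.Ioo a β) := ⟨⟨γ₀, hγ₀⟩⟩
          have hbdd : BddBelow (Set.range fun γ : Set.Ioo a β => f γ) := by
            refine ⟨-1, ?_⟩
            rintro x ⟨⟨γ, hγ⟩, rfl⟩
            exact le_trans (neg_one_le_gpar γ)
              (le_of_eq (IH γ (hγ.2.trans hβα) ((hγ.2.trans hβα).trans hα)).symm)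
          refine le_antisymm ?_ (le_ciInf ?_)
          · have h1' : f γ₀ = -1 := by
              rw [IH _ (hγ₀.2.trans hβα) ((hγ₀.2.trans hβα).trans hα), hγ₀v]
            calc (⨅ γ : Set.Ioo a β, f γ) ≤ f γ₀ := ciInf_le hbdd (⟨γ₀, hγ₀⟩ : Set.Ioo a β)
              _ = -1 := h1'
          · rintro ⟨γ, hγ⟩
            exact le_trans (neg_one_le_gpar γ)
              (le_of_eq (IH γ (hγ.2.trans hβα) ((hγ.2.trans hβα).trans hα)).symm)
        have hne0 : Nonempty (Set.Iio β) := ⟨⟨0, hβlim.pos⟩⟩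
        rw [iSup_congr hinf, ciSup_const]
        unfold gpar
        rw [← hβ, ← Ordinal.add_one_eq_succ, mod2_succ_even (mod2_limit hβlim)]
        norm_num
  -- Step 2: too many points where `f` takes a value different from `c`.
  have hΓinf : Cardinal.aleph0 < Γ := lt_of_le_of_lt hκ hκΓ
  have hone : (1 : Cardinal) < Γ := lt_of_lt_of_le Cardinal.one_lt_aleph0 hΓinf.le
  -- The limit ordinals `ω*(α+1)` and their bound.
  have hLlim : ∀ α : Ordinal.{u}, Order.IsSuccLimit (Ordinal.omega0 * (α + 1)) := fun α =>
    Ordinal.isSuccLimit_mul_left Ordinal.isSuccLimit_omega0 (by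
      simpa using (add_lt_add_left (by norm_num : (0 : Ordinal) < 1) α))
  have hLbound : ∀ α < Γ.ord, Ordinal.omega0 * (α + 1) + 1 < Γ.ord := by
    intro α hα
    rw [Cardinal.lt_ord] at hα ⊢
    rw [Ordinal.card_add, Ordinal.card_mul, Ordinal.card_add, Ordinal.card_omega0,
      Ordinal.card_one]
    exact Cardinal.add_lt_of_lt hΓinf.le
      (Cardinal.mul_lt_of_lt hΓinf.le hΓinf
        (Cardinal.add_lt_of_lt hΓinf.le hα hone)) hone
  have hLmono : StrictMono fun α : Ordinal.{u} => Ordinal.omega0 * (α + 1) := by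
    intro a b hab
    refine (mul_lt_mul_iff_of_pos_left Ordinal.omega0_pos).2 ?_
    rw [Ordinal.add_one_eq_succ, Ordinal.add_one_eq_succ]
    exact Order.succ_lt_succ hab
  -- pick the offset depending on `c`
  obtain ⟨p, hp1, hpv⟩ : ∃ p : Ordinal, p ≤ 1 ∧
      ∀ α < Γ.ord, f (Ordinal.omega0 * (α + 1) + p) ≠ c := by
    by_cases hc : c = 1
    · refine ⟨1, le_rfl, fun α hα => ?_⟩
      have hlt : Ordinal.omega0 * (α + 1) + 1 < Γ.ord := hLbound α hα
      rw [key _ hlt]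
      unfold gpar
      rw [mod2_succ_even (mod2_limit (hLlim α)), hc]
      norm_num
    · refine ⟨0, zero_le_one, fun α hα => ?_⟩
      have hlt : Ordinal.omega0 * (α + 1) < Γ.ord :=
        lt_trans (by simpa using (add_lt_add_left (by norm_num : (0 : Ordinal) < 1)
          (Ordinal.omega0 * (α + 1)))) (hLbound α hα)
      rw [add_zero, key _ hlt]
      unfold gpar
      rw [mod2_limit (hLlim α), if_pos rfl]
      exact fun he => hc he.symm
  -- injection of `Iio Γ.ord` into `A`
  have hmem : ∀ α (hα : α < Γ.ord), Ordinal.omega0 * (α + 1) + p ∈ A := by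
    intro α hα
    have hlt : Ordinal.omega0 * (α + 1) + p < Γ.ord :=
      lt_of_le_of_lt (add_le_add_right hp1 _) (hLbound α hα)
    by_contra hnot
    exact hpv α hα (hAc _ hlt hnot)
  have hstrict : ∀ a b : Ordinal.{u}, a < b →
      Ordinal.omega0 * (a + 1) + p < Ordinal.omega0 * (b + 1) + p := by
    intro a b hab
    have h1' : Ordinal.omega0 * (a + 1) + p < Ordinal.omega0 * (b + 1) := by
      rcases lt_or_eq_of_le hp1 with hp | hp
      · have hp0 : p = 0 := by
          rcases Ordinal.le_one_iff.1 hp1 with h | h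
          · exact h
          · exact absurd h hp.ne
        rw [hp0, add_zero]; exact hLmono hab
      · rw [hp, Ordinal.add_one_eq_succ]
        exact (hLlim b).succ_lt (hLmono hab)
    exact lt_of_lt_of_le h1' le_self_add
  have hinj : Function.Injective
      (fun x : Set.Iio Γ.ord => (⟨Ordinal.omega0 * ((x : Ordinal) + 1) + p,
        hmem x x.2⟩ : A)) := by
    rintro ⟨a, ha⟩ ⟨b, hb⟩ hab
    simp only [Subtype.mk.injEq] at hab ⊢
    rcases lt_trichotomy a b with h | h | h
    · exact absurd hab (hstrict a b h).ne
    · exact h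
    · exact absurd hab.symm (hstrict b a h).ne
  have hle : Cardinal.lift.{u+1} Γ ≤ Cardinal.mk A := by
    have := Cardinal.mk_le_of_injective hinj
    rwa [Ordinal.mk_Iio_ordinal, Cardinal.card_ord] at this
  exact absurd (Cardinal.lift_le.1 (hle.trans hA)) (not_le_of_gt hκΓ)
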